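/- (Graham–Sloane-type lower bound for light codes) If n ≥ 4W, then L(W,n,w) ≥ (1/(n−2W))·C(n,w), i.e., there is an orientation of the Johnson graph J(n,w) under which at least C(n,w)/(n−2W) vertices have outdegree at most W. -/

import Mathlib

def weight {n : ℕ} (B : Fin n → Bool) : ℕ :=
  (Finset.univ.filter (fun i => B i = true)).card

def hamming {n : ℕ} (B B' : Fin n → Bool) : ℕ :=
  (Finset.univ.filter (fun i => B i ≠ B' i)).card

theorem hamming_comm {n : ℕ} (B B' : Fin n → Bool) : hamming B B' = hamming B' B := by
  unfold hamming; congr 1; ext i; simp [ne_comm]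

def johnson (n w : ℕ) : SimpleGraph {B : Fin n → Bool // weight B = w} where
  Adj B B' := hamming B.1 B'.1 = 2
  symm := ⟨fun B B' h => by rwa [hamming_comm]⟩
  loopless := ⟨fun B h => by simp [hamming] at h⟩

structure GraphOrientation {V : Type*} (G : SimpleGraph V) where
  dir : V → V → Prop
  dir_adj : ∀ u v, dir u v → G.Adj u v
  total : ∀ u v, G.Adj u v → dir u v ∨ dir v u
  asymm : ∀ u v, dir u v → ¬ dir v u

noncomputable def outdeg {V : Type*} {G : SimpleGraph V} (Λ : GraphOrientation G) (v : V) : ℕ :=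
  {u | Λ.dir v u}.ncard

noncomputable def Lmax (W n w : ℕ) : ℕ :=
  sSup {k | ∃ Λ : GraphOrientation (johnson n w), k = {B | outdeg Λ B ≤ W}.ncard}

/-!
Split the vertices by `positionSum B mod m` with `m = n - 2W`; some class has at least
`C(n,w)/m` members. Since `n ≤ 2m`, two adjacent vertices of one class differ exactly at
positions `c` and `c + m` for some `c < 2W`. Group the positions below `2W` into the `W` pairs
`{2j, 2j+1}` and let a vertex `x` orient its class edge at `c` outwards iff `c` is the position
`pairChoice x j` singled out by whether `x` agrees on the pair. Flipping `c` toggles that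
agreement, so every class edge gets exactly one direction and each vertex has at most one
out-edge per pair. Edges leaving the class are oriented into it.
-/

theorem GraphOrientation.exists_forall_mem_dir_imp {V : Type*} (G : SimpleGraph V) (S : Set V)
    (D : V → V → Prop) (asymm : ∀ u v, D u v → ¬ D v u)
    (total : ∀ u ∈ S, ∀ v ∈ S, G.Adj u v → D u v ∨ D v u) :
    ∃ Λ : GraphOrientation G, ∀ u ∈ S, ∀ v, Λ.dir u v → D u v := by
  let dir u v := G.Adj u v ∧ ((u ∈ S ∧ v ∈ S ∧ D u v) ∨ (u ∉ S ∧ v ∈ S) ∨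
    (u ∉ S ∧ v ∉ S ∧ WellOrderingRel u v))
  refine ⟨⟨dir, fun _ _ h => h.1, fun u v huv => ?_, fun u v huv hvu => ?_⟩, ?_⟩
  · have hvu := huv.symm
    by_cases hu : u ∈ S <;> by_cases hv : v ∈ S
    · exact (total u hu v hv huv).imp (fun h => ⟨huv, .inl ⟨hu, hv, h⟩⟩)
        (fun h => ⟨hvu, .inl ⟨hv, hu, h⟩⟩)
    · exact .inr ⟨hvu, .inr (.inl ⟨hv, hu⟩)⟩
    · exact .inl ⟨huv, .inr (.inl ⟨hu, hv⟩)⟩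
    · rcases trichotomous_of WellOrderingRel u v with h | rfl | h
      · exact .inl ⟨huv, .inr (.inr ⟨hu, hv, h⟩)⟩
      · exact absurd huv (G.loopless.irrefl u)
      · exact .inr ⟨hvu, .inr (.inr ⟨hv, hu, h⟩)⟩
  · rcases huv with ⟨-, ⟨hu, hv, h⟩ | ⟨hu, hv⟩ | ⟨hu, hv, h⟩⟩ <;>
      rcases hvu with ⟨-, ⟨hv', hu', h'⟩ | ⟨hv', hu'⟩ | ⟨hv', hu', h'⟩⟩ <;>
      first | contradiction | exact asymm u v h h' | exact asymm_of WellOrderingRel h h'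
  · rintro u hu v ⟨-, ⟨-, -, h⟩ | ⟨hu', -⟩ | ⟨hu', -⟩⟩
    exacts [h, absurd hu hu', absurd hu hu']

theorem ncard_setOf_outdeg_le_le_Lmax {W n w : ℕ} (Λ : GraphOrientation (johnson n w)) :
    {B | outdeg Λ B ≤ W}.ncard ≤ Lmax W n w :=
  le_csSup ⟨Nat.card {B : Fin n → Bool // weight B = w}, by
    rintro k ⟨Λ', rfl⟩
    exact Set.ncard_le_card _⟩ ⟨Λ, rfl⟩

def weightEquivFinset (n w : ℕ) :
    {B : Fin n → Bool // weight B = w} ≃ {s : Finset (Fin n) // s.card = w} where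
  toFun B := ⟨Finset.univ.filter (fun i => B.1 i = true), B.2⟩
  invFun s := ⟨fun i => decide (i ∈ s.1), by simpa [weight] using s.2⟩
  left_inv B := by ext i; simp
  right_inv s := by ext i; simp

theorem card_johnson_vertices (n w : ℕ) :
    Fintype.card {B : Fin n → Bool // weight B = w} = n.choose w := by
  rw [Fintype.card_congr (weightEquivFinset n w), Fintype.card_finset_len, Fintype.card_fin]

theorem Fintype.exists_card_le_mul_card_filter_mod {α : Type*} [Fintype α] (f : α → ℕ) {m : ℕ}
    (hm : 0 < m) : ∃ t, Fintype.card α ≤ m * (Finset.univ.filter fun a => f a % m = t).card := by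
  have hsum : Fintype.card α =
      ∑ t ∈ Finset.range m, (Finset.univ.filter fun a => f a % m = t).card :=
    Finset.card_eq_sum_card_fiberwise fun a _ => Finset.mem_range.2 (Nat.mod_lt _ hm)
  obtain ⟨t, -, ht⟩ := Finset.exists_le_of_sum_le (f := fun _ => Fintype.card α)
    (g := fun t => m * (Finset.univ.filter fun a => f a % m = t).card)
    (Finset.nonempty_range_iff.2 hm.ne') (by
      rw [Finset.sum_const, ← Finset.mul_sum, ← hsum, Finset.card_range, smul_eq_mul])
  exact ⟨t, ht⟩

section PairRule

variable {W m c j : ℕ} {x y : ℕ → Bool}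

def flipShift (m c : ℕ) (x : ℕ → Bool) : ℕ → Bool :=
  fun k => if k = c ∨ k = c + m then !x k else x k

def pairChoice (x : ℕ → Bool) (j : ℕ) : ℕ :=
  if x (2 * j) = x (2 * j + 1) then 2 * j else 2 * j + 1

def PairRule (W m : ℕ) (x y : ℕ → Bool) : Prop :=
  ∃ j < W, y = flipShift m (pairChoice x j) x

@[simp]
theorem flipShift_flipShift : flipShift m c (flipShift m c x) = x := by
  funext k; unfold flipShift; split_ifs <;> simp

theorem eq_of_flipShift_eq {c' : ℕ} (hc : c < m) (h : flipShift m c x = flipShift m c' x) :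
    c = c' := by
  have := congrFun h c
  unfold flipShift at this
  by_contra hne
  rw [if_pos (.inl rfl), if_neg (by omega)] at this
  simp at this

theorem pairChoice_div_two : pairChoice x j / 2 = j := by
  unfold pairChoice; split_ifs <;> omega

theorem pairChoice_flipShift_eq_iff (hc : c / 2 = j) (hj : 2 * j + 1 < m) :
    pairChoice (flipShift m c x) j = c ↔ pairChoice x j ≠ c := by
  have hc' : c = 2 * j ∨ c = 2 * j + 1 := by omega
  unfold pairChoice flipShift
  rcases hc' with rfl | rfl <;> cases x (2 * j) <;> cases x (2 * j + 1) <;> simp <;> omega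

theorem PairRule.asymm (hWm : 2 * W ≤ m) (hxy : PairRule W m x y) : ¬ PairRule W m y x := by
  obtain ⟨j, hj, rfl⟩ := hxy
  rintro ⟨j', -, hj'⟩
  set c := pairChoice x j
  have hcj : c / 2 = j := pairChoice_div_two
  have hcm : c < m := by omega
  have hc : c = pairChoice (flipShift m c x) j' :=
    eq_of_flipShift_eq hcm (by rw [flipShift_flipShift, ← hj'])
  have hjj' : j' = j := by rw [← hcj, hc, pairChoice_div_two]
  subst hjj'
  exact (pairChoice_flipShift_eq_iff hcj (by omega)).1 hc.symm rfl

theorem PairRule.total (hWm : 2 * W ≤ m) (hc : c < 2 * W) (hy : y = flipShift m c x) :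
    PairRule W m x y ∨ PairRule W m y x := by
  have hcj : c / 2 < W := by omega
  by_cases hx : pairChoice x (c / 2) = c
  · exact .inl ⟨c / 2, hcj, by rw [hx, hy]⟩
  · have hy' : pairChoice y (c / 2) = c := by
      rw [hy]; exact (pairChoice_flipShift_eq_iff rfl (by omega)).2 hx
    exact .inr ⟨c / 2, hcj, by rw [hy', hy, flipShift_flipShift]⟩

theorem PairRule.setOf_subset_image (x : ℕ → Bool) :
    {y | PairRule W m x y} ⊆ (fun j => flipShift m (pairChoice x j) x) '' Set.Iio W := by
  rintro y ⟨j, hj, rfl⟩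
  exact ⟨j, hj, rfl⟩

theorem PairRule.finite_setOf (x : ℕ → Bool) : {y | PairRule W m x y}.Finite :=
  ((Set.finite_Iio W).image _).subset (PairRule.setOf_subset_image x)

theorem PairRule.ncard_setOf_le (x : ℕ → Bool) : {y | PairRule W m x y}.ncard ≤ W :=
  calc {y | PairRule W m x y}.ncard
      ≤ ((fun j => flipShift m (pairChoice x j) x) '' Set.Iio W).ncard :=
        Set.ncard_le_ncard (PairRule.setOf_subset_image x) ((Set.finite_Iio W).image _)
    _ ≤ (Set.Iio W).ncard := Set.ncard_image_le (Set.finite_Iio W)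
    _ = W := by simp

end PairRule

section BoolVectors

variable {n m : ℕ} {B B' : Fin n → Bool}

def positionSum (B : Fin n → Bool) : ℕ := ∑ i, if B i then (i : ℕ) else 0

def toWord (B : Fin n → Bool) : ℕ → Bool := fun k => if h : k < n then B ⟨k, h⟩ else false

theorem toWord_injective : Function.Injective (toWord (n := n)) := by
  intro B B' h
  funext k
  simpa [toWord] using congrFun h k

theorem exists_ne_iff_of_hamming_eq_two (h : hamming B B' = 2) :
    ∃ a b, a ≠ b ∧ ∀ k, B k ≠ B' k ↔ k = a ∨ k = b := by
  obtain ⟨a, b, hab, hD⟩ := Finset.card_eq_two.1 h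
  exact ⟨a, b, hab, fun k => by simpa using Finset.ext_iff.1 hD k⟩

theorem sum_ite_sub_sum_ite_of_ne_iff {R : Type*} [CommRing R] (f : Fin n → R) {a b : Fin n}
    (hab : a ≠ b) (hdiff : ∀ k, B k ≠ B' k ↔ k = a ∨ k = b) :
    ∑ i, (if B i then f i else 0) - ∑ i, (if B' i then f i else 0) =
      (if B a then f a else -f a) + (if B b then f b else -f b) := by
  have hflip : ∀ k, k = a ∨ k = b → B' k = !B k := fun k hk => by
    have := (hdiff k).2 hk
    revert this; cases B k <;> cases B' k <;> simp
  rw [← Finset.sum_sub_distrib, Fintype.sum_eq_add a b hab]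
  · rw [hflip a (.inl rfl), hflip b (.inr rfl)]
    cases B a <;> cases B b <;> simp
  · rintro k ⟨hka, hkb⟩
    have : B k = B' k := by
      by_contra hk
      exact (hdiff k).1 hk |>.elim hka hkb
    simp [this]

theorem dvd_sub_of_ne_iff {a b : Fin n} (hab : a ≠ b) (hdiff : ∀ k, B k ≠ B' k ↔ k = a ∨ k = b)
    (hw : weight B = weight B') (hτ : positionSum B ≡ positionSum B' [MOD m]) :
    (m : ℤ) ∣ (a : ℤ) - b := by
  have hweight := sum_ite_sub_sum_ite_of_ne_iff (fun _ => (1 : ℤ)) hab hdiff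
  have hpos := sum_ite_sub_sum_ite_of_ne_iff (fun i => ((i : ℕ) : ℤ)) hab hdiff
  have hcast : ∀ B : Fin n → Bool, (weight B : ℤ) = ∑ i, if B i then (1 : ℤ) else 0 := fun B => by
    rw [weight, Finset.card_filter]; push_cast; rfl
  rw [← hcast, ← hcast, hw, sub_self] at hweight
  have hdvd := (Nat.modEq_iff_dvd.1 hτ.symm)
  simp only [positionSum, Nat.cast_sum, Nat.cast_ite, Nat.cast_zero] at hdvd
  rw [hpos] at hdvd
  cases hBa : B a <;> cases hBb : B b <;> simp [hBa, hBb] at hweight hdvd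
  · rwa [dvd_sub_comm, sub_eq_neg_add]
  · rwa [← sub_eq_add_neg] at hdvd

theorem toWord_eq_flipShift {c : ℕ} (hcm : c + m < n)
    (hdiff : ∀ k : Fin n, B k ≠ B' k ↔ (k : ℕ) = c ∨ (k : ℕ) = c + m) :
    toWord B' = flipShift m c (toWord B) := by
  funext k
  unfold toWord flipShift
  by_cases hk : k < n
  · have hk' := hdiff ⟨k, hk⟩
    simp only [dif_pos hk]
    split_ifs with hc
    · exact Bool.eq_not_iff.2 (hk'.2 hc).symm
    · exact (not_not.1 (mt hk'.1 hc)).symm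
  · simp only [dif_neg hk]
    rw [if_neg (by omega)]

theorem exists_flipShift_of_hamming_eq_two (hnm : n ≤ 2 * m) (h : hamming B B' = 2)
    (hw : weight B = weight B') (hτ : positionSum B ≡ positionSum B' [MOD m]) :
    ∃ c, c + m < n ∧ toWord B' = flipShift m c (toWord B) := by
  obtain ⟨a, b, hab, hdiff⟩ := exists_ne_iff_of_hamming_eq_two h
  have hdvd := dvd_sub_of_ne_iff hab hdiff hw hτ
  have ha := a.isLt
  have hb := b.isLt
  have hab' : (a : ℕ) ≠ b := Fin.val_ne_of_ne hab
  -- distinct positions below `n ≤ 2 m` that are congruent mod `m` lie exactly `m` apart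
  have hgap : (a : ℕ) + m = b ∨ (b : ℕ) + m = a := by
    rcases lt_or_gt_of_ne hab' with hlt | hlt
    · have := Int.eq_zero_of_abs_lt_dvd (x := (a : ℤ) - b + m) (dvd_add_self_right.2 hdvd)
        (abs_lt.2 ⟨by omega, by omega⟩)
      omega
    · have := Int.eq_zero_of_abs_lt_dvd (x := (a : ℤ) - b - m) (dvd_sub_self_right.2 hdvd)
        (abs_lt.2 ⟨by omega, by omega⟩)
      omega
  rcases hgap with hgap | hgap
  · refine ⟨a, by omega, toWord_eq_flipShift (by omega) fun k => ?_⟩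
    rw [hdiff, Fin.ext_iff, Fin.ext_iff]; omega
  · refine ⟨b, by omega, toWord_eq_flipShift (by omega) fun k => ?_⟩
    rw [hdiff, Fin.ext_iff, Fin.ext_iff]; omega

end BoolVectors

theorem exists_orientation_outdeg_le_of_positionSum_mod {W n w : ℕ} (hW : 4 * W ≤ n) (t : ℕ) :
    ∃ Λ : GraphOrientation (johnson n w),
      ∀ B, positionSum B.1 % (n - 2 * W) = t → outdeg Λ B ≤ W := by
  set m := n - 2 * W
  obtain ⟨Λ, hΛ⟩ := GraphOrientation.exists_forall_mem_dir_imp (johnson n w)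
    {B | positionSum B.1 % m = t}
    (fun B B' => PairRule W m (toWord B.1) (toWord B'.1)) (fun _ _ => PairRule.asymm (by omega))
    (fun B hB B' hB' hadj => by
      obtain ⟨c, hc, hword⟩ := exists_flipShift_of_hamming_eq_two (by omega) hadj
        (B.2.trans B'.2.symm) (hB.trans hB'.symm)
      exact PairRule.total (by omega) (by omega) hword)
  refine ⟨Λ, fun B hB => ?_⟩
  calc outdeg Λ B ≤ {B' : {B : Fin n → Bool // weight B = w} |
        PairRule W m (toWord B.1) (toWord B'.1)}.ncard :=
      Set.ncard_le_ncard fun B' => hΛ B hB B'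
    _ ≤ {y | PairRule W m (toWord B.1) y}.ncard :=
        Set.ncard_le_ncard_of_injOn (fun B' => toWord B'.1) (fun _ h => h)
          (toWord_injective.comp Subtype.val_injective).injOn (PairRule.finite_setOf _)
    _ ≤ W := PairRule.ncard_setOf_le _

theorem stmt13 (W n w : ℕ) (hW : 4 * W ≤ n) (hn : 0 < n) :
    n.choose w ≤ (n - 2 * W) * Lmax W n w := by
  obtain ⟨t, ht⟩ := Fintype.exists_card_le_mul_card_filter_mod
    (fun B : {B : Fin n → Bool // weight B = w} => positionSum B.1) (m := n - 2 * W) (by omega)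
  obtain ⟨Λ, hΛ⟩ := exists_orientation_outdeg_le_of_positionSum_mod (w := w) hW t
  calc n.choose w = Fintype.card {B : Fin n → Bool // weight B = w} :=
        (card_johnson_vertices n w).symm
    _ ≤ (n - 2 * W) * (Finset.univ.filter fun B : {B : Fin n → Bool // weight B = w} =>
          positionSum B.1 % (n - 2 * W) = t).card := ht
    _ ≤ (n - 2 * W) * {B | outdeg Λ B ≤ W}.ncard := by
        rw [← Set.ncard_coe_finset]
        exact Nat.mul_le_mul_left _ <| Set.ncard_le_ncard fun B hB => hΛ B (by simpa using hB)
    _ ≤ (n - 2 * W) * Lmax W n w := Nat.mul_le_mul_left _ (ncard_setOf_outdeg_le_le_Lmax Λ)
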